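/- The language { aⁿ # aᵐ # a^{n·m} | n, m ∈ ℕ } is accepted by a (non-deterministic, non-bounded-visit) two-way Parikh automaton of dimension 2 with semi-linear constraint {(0,0)}. -/

import Mathlib

/-- Two-way finite automaton; `Sum.inr false` is the left delimiter ⊢,
`Sum.inr true` is the right delimiter ⊣. -/
structure TwoWayFA (σ : Type) (Q : Type) where
  /-- reading direction of each state: `true` = right-reading -/
  isRight : Q → Bool
  init : Set Q
  acc : Set Q
  trans : Q → (σ ⊕ Bool) → Q → Prop

lemma List.replicate_append_cons_inj {α : Type} {x y : α} (hxy : x ≠ y) :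
    ∀ {i j : ℕ} {R R' : List α},
      List.replicate i x ++ y :: R = List.replicate j x ++ y :: R' → i = j
  | 0, 0, _, _, _ => rfl
  | 0, _ + 1, _, _, h => absurd (List.cons.inj h).1 hxy.symm
  | _ + 1, 0, _, _, h => absurd (List.cons.inj h).1 hxy
  | _ + 1, _ + 1, _, _, h => by
    simp only [List.replicate_succ, List.cons_append, List.cons.injEq, true_and] at h
    rw [List.replicate_append_cons_inj hxy h]

namespace TwoWayFA

variable {σ Q : Type}

/-- The letter of ⊢w⊣ at index `i` (0-based). -/
def readAt (w : List σ) (i : ℕ) : Option (σ ⊕ Bool) :=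
  if i = 0 then some (Sum.inr false)
  else if i = w.length + 1 then some (Sum.inr true)
  else (w[i - 1]?).map Sum.inl

/-- Index of the letter read from configuration `c = (state, head position)`,
where the head position counts the letters of ⊢w⊣ to the left of the head. -/
def readIdx (A : TwoWayFA σ Q) (c : Q × ℕ) : ℕ :=
  if A.isRight c.1 then c.2 else c.2 - 1

def step (A : TwoWayFA σ Q) (w : List σ) (c c' : Q × ℕ) : Prop :=
  ∃ a, readAt w (A.readIdx c) = some a ∧ A.trans c.1 a c'.1 ∧
    (if A.isRight c.1 then c'.2 = c.2 + 1 else c.2 ≠ 0 ∧ c'.2 = c.2 - 1)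

def IsRun (A : TwoWayFA σ Q) (w : List σ) (ρ : List (Q × ℕ)) : Prop :=
  ρ ≠ [] ∧ ρ.Chain' (A.step w)

/-- An accepting run starts at the left end of ⊢w⊣ in an initial state and
halts past the right delimiter in an accepting state. -/
def IsAccRun (A : TwoWayFA σ Q) (w : List σ) (ρ : List (Q × ℕ)) : Prop :=
  A.IsRun w ρ ∧ (∃ q ∈ A.init, ρ.head? = some (q, 0)) ∧
    (∃ q ∈ A.acc, ρ.getLast? = some (q, w.length + 2))

def lang (A : TwoWayFA σ Q) : Set (List σ) := {w | ∃ ρ, A.IsAccRun w ρ}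

def Deterministic (A : TwoWayFA σ Q) : Prop :=
  A.init.Subsingleton ∧ ∀ q a q₁ q₂, A.trans q a q₁ → A.trans q a q₂ → q₁ = q₂

def OneWay (A : TwoWayFA σ Q) : Prop := ∀ q, A.isRight q = true

def Unambiguous (A : TwoWayFA σ Q) : Prop :=
  ∀ w ρ₁ ρ₂, A.IsAccRun w ρ₁ → A.IsAccRun w ρ₂ → ρ₁ = ρ₂

end TwoWayFA

/-- Number of visits of run `ρ` to input position `p`. -/
def visits {Q : Type} (ρ : List (Q × ℕ)) (p : ℕ) : ℕ :=
  (ρ.filter fun c => c.2 == p).length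

/-- A run is `k`-visit if it visits every input position at most `k` times. -/
def KVisit {Q : Type} (k : ℕ) (ρ : List (Q × ℕ)) : Prop := ∀ p, visits ρ p ≤ k

/-- `A` is `k`-visit: every accepting run visits each position at most `k` times. -/
def TwoWayFA.IsKVisit {σ Q : Type} (A : TwoWayFA σ Q) (k : ℕ) : Prop :=
  ∀ w ρ, A.IsAccRun w ρ → KVisit k ρ

/-- Weight of a step (a pair of consecutive configurations) of a Parikh automaton. -/
def stepWeight {σ Q : Type} (A : TwoWayFA σ Q) {d : ℕ}
    (lam : Q → (σ ⊕ Bool) → Q → (Fin d → ℤ)) (w : List σ)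
    (cc : (Q × ℕ) × (Q × ℕ)) : Fin d → ℤ :=
  match TwoWayFA.readAt w (A.readIdx cc.1) with
  | some a => lam cc.1.1 a cc.2.1
  | none => 0

/-- Value of a run of a Parikh automaton: the sum of the weight vectors of its steps. -/
def runVal {σ Q : Type} (A : TwoWayFA σ Q) {d : ℕ}
    (lam : Q → (σ ⊕ Bool) → Q → (Fin d → ℤ)) (w : List σ) (ρ : List (Q × ℕ)) :
    Fin d → ℤ :=
  ((ρ.zip ρ.tail).map (stepWeight A lam w)).sum

/-- Language of a two-way Parikh automaton `(A, lam, S)` with semi-linear constraint `S`. -/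
def paLang {σ Q : Type} (A : TwoWayFA σ Q) {d : ℕ}
    (lam : Q → (σ ⊕ Bool) → Q → (Fin d → ℤ)) (S : Set (Fin d → ℤ)) : Set (List σ) :=
  {w | ∃ ρ, A.IsAccRun w ρ ∧ runVal A lam w ρ ∈ S}

/-- The alphabet {a, #}. -/
inductive AHash : Type
  | a | hash
deriving DecidableEq

/-!
A run makes some number `p` of counting passes over the first block `aⁿ`, each adding `(n, 1)`
and returning to `⊢`, and then a last pass that skips `aⁿ` and subtracts `(0, 1)` for each letter
of the second block `aᵐ` and `(1, 0)` for each letter of the third block `aᵏ`. Its value is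
`(p·n - k, p - m)`, which vanishes exactly when `p = m` and `k = n·m`.

That every accepting run has this form is seen backwards from the accepting configuration: the
state determines the shape of the unread part of the word and of the value still to be
accumulated, and prepending a step preserves that description. All counting passes see the same
`n` because the first block is delimited by the first `#`.
-/

namespace TwoWayFA

variable {σ Q : Type} {d : ℕ}

section ReadAt

variable {w : List σ} {i : ℕ} {c : σ}

@[simp]
lemma readAt_zero (w : List σ) : readAt w 0 = some (.inr false) := rfl

lemma readAt_length_add_one (w : List σ) : readAt w (w.length + 1) = some (.inr true) := by
  simp [readAt]

lemma readAt_succ_eq_inl_iff : readAt w (i + 1) = some (.inl c) ↔ w[i]? = some c := by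
  by_cases hi : i = w.length <;> simp [readAt, hi]

lemma readAt_succ_of_drop_eq_cons {R : List σ} (h : w.drop i = c :: R) :
    readAt w (i + 1) = some (.inl c) := by
  rw [readAt_succ_eq_inl_iff, ← Nat.add_zero i, ← List.getElem?_drop, h]
  rfl

lemma drop_pred_eq_cons_of_readAt (h : readAt w i = some (.inl c)) :
    w.drop (i - 1) = c :: w.drop i := by
  obtain _ | i := i
  · simp at h
  · obtain ⟨hi, rfl⟩ := List.getElem?_eq_some_iff.1 (readAt_succ_eq_inl_iff.1 h)
    exact List.drop_eq_getElem_cons hi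

lemma eq_zero_of_readAt_eq_inr_false (h : readAt w i = some (.inr false)) : i = 0 := by
  unfold readAt at h
  split_ifs at h <;> simp_all

lemma eq_length_add_one_of_readAt_eq_inr_true (h : readAt w i = some (.inr true)) :
    i = w.length + 1 := by
  unfold readAt at h
  split_ifs at h <;> simp_all

end ReadAt

variable (A : TwoWayFA σ Q) (lam : Q → (σ ⊕ Bool) → Q → (Fin d → ℤ)) (w : List σ)

inductive Reaches : Q × ℕ → Q × ℕ → (Fin d → ℤ) → Prop
  | refl (c : Q × ℕ) : Reaches c c 0
  | head {c c' e : Q × ℕ} {v : Fin d → ℤ} :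
      A.step w c c' → Reaches c' e v → Reaches c e (stepWeight A lam w (c, c') + v)

variable {A lam w}

lemma Reaches.trans {c c' e : Q × ℕ} {v v' : Fin d → ℤ} (h : A.Reaches lam w c c' v)
    (h' : A.Reaches lam w c' e v') : A.Reaches lam w c e (v + v') := by
  induction h with
  | refl => simpa using h'
  | head hs _ ih => simpa [add_assoc] using (ih h').head hs

lemma runVal_cons_cons (c c' : Q × ℕ) (ρ : List (Q × ℕ)) :
    runVal A lam w (c :: c' :: ρ) = stepWeight A lam w (c, c') + runVal A lam w (c' :: ρ) := by
  simp [runVal]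

lemma Reaches.exists_run {c e : Q × ℕ} {v : Fin d → ℤ} (h : A.Reaches lam w c e v) :
    ∃ ρ, ρ.IsChain (A.step w) ∧ ρ.head? = some c ∧ ρ.getLast? = some e ∧
      runVal A lam w ρ = v := by
  induction h with
  | refl c => exact ⟨[c], .singleton c, rfl, rfl, by simp [runVal]⟩
  | @head c c' _ _ hs _ ih =>
    obtain ⟨_ | ⟨c'', ρ⟩, hρ, hhead, hlast, hval⟩ := ih
    · simp at hhead
    obtain rfl : c' = c'' := by simpa using hhead.symm
    refine ⟨c :: c' :: ρ, hρ.cons_cons hs, rfl, ?_, ?_⟩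
    · simpa [List.getLast?_cons_cons] using hlast
    · rw [runVal_cons_cons, hval]

lemma reaches_of_isChain : ∀ {ρ : List (Q × ℕ)} {c e : Q × ℕ}, ρ.IsChain (A.step w) →
    ρ.head? = some c → ρ.getLast? = some e → A.Reaches lam w c e (runVal A lam w ρ)
  | [], _, _, _, hhead, _ => by simp at hhead
  | [c], _, _, _, hhead, hlast => by
    obtain rfl : c = _ := by simpa using hhead
    obtain rfl : c = _ := by simpa using hlast
    simpa [runVal] using Reaches.refl c
  | c :: c' :: ρ, _, e, hρ, hhead, hlast => by
    obtain rfl : c = _ := by simpa using hhead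
    rw [List.isChain_cons_cons] at hρ
    rw [runVal_cons_cons]
    have hlast' : (c' :: ρ).getLast? = some e := by simpa [List.getLast?_cons_cons] using hlast
    exact .head hρ.1 (reaches_of_isChain hρ.2 rfl hlast')

lemma mem_paLang_iff {S : Set (Fin d → ℤ)} :
    w ∈ paLang A lam S ↔
      ∃ q₀ ∈ A.init, ∃ q₁ ∈ A.acc, ∃ v ∈ S, A.Reaches lam w (q₀, 0) (q₁, w.length + 2) v := by
  constructor
  · rintro ⟨ρ, ⟨⟨-, hρ⟩, ⟨q₀, hq₀, hhead⟩, ⟨q₁, hq₁, hlast⟩⟩, hv⟩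
    exact ⟨q₀, hq₀, q₁, hq₁, _, hv, reaches_of_isChain hρ hhead hlast⟩
  · rintro ⟨q₀, hq₀, q₁, hq₁, v, hv, h⟩
    obtain ⟨ρ, hρ, hhead, hlast, rfl⟩ := h.exists_run
    have hne : ρ ≠ [] := by rintro rfl; simp at hhead
    exact ⟨ρ, ⟨⟨hne, hρ⟩, ⟨q₀, hq₀, hhead⟩, ⟨q₁, hq₁, hlast⟩⟩, hv⟩

lemma stepWeight_eq {c c' : Q × ℕ} {x : σ ⊕ Bool} (h : readAt w (A.readIdx c) = some x) :
    stepWeight A lam w (c, c') = lam c.1 x c'.1 := by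
  simp [stepWeight, h]

lemma Reaches.single_right {q q' : Q} {i : ℕ} {x : σ ⊕ Bool} (hq : A.isRight q)
    (hx : readAt w i = some x) (ht : A.trans q x q') :
    A.Reaches lam w (q, i) (q', i + 1) (lam q x q') := by
  have hx' : readAt w (A.readIdx (q, i)) = some x := by simpa [readIdx, hq] using hx
  simpa [stepWeight_eq hx'] using (Reaches.refl _).head ⟨x, hx', ht, by simp [hq]⟩

lemma Reaches.single_left {q q' : Q} {i : ℕ} {x : σ ⊕ Bool} (hq : A.isRight q = false)
    (hx : readAt w i = some x) (ht : A.trans q x q') :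
    A.Reaches lam w (q, i + 1) (q', i) (lam q x q') := by
  have hx' : readAt w (A.readIdx (q, i + 1)) = some x := by simpa [readIdx, hq] using hx
  simpa [stepWeight_eq hx'] using (Reaches.refl _).head ⟨x, hx', ht, by simp [hq]⟩

lemma reaches_replicate_right {q : Q} {x : σ} (hq : A.isRight q) (ht : A.trans q (.inl x) q)
    {R : List σ} : ∀ {i : ℕ} (n : ℕ), w.drop i = List.replicate n x ++ R →
      A.Reaches lam w (q, i + 1) (q, i + n + 1) (n • lam q (.inl x) q)
  | i, 0, _ => by simpa using Reaches.refl (q, i + 1)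
  | i, n + 1, h => by
    have hnext : w.drop (i + 1) = List.replicate n x ++ R := by
      rw [← List.tail_drop, h]; rfl
    rw [show i + (n + 1) + 1 = i + 1 + n + 1 by omega, succ_nsmul']
    exact (Reaches.single_right hq (readAt_succ_of_drop_eq_cons h) ht).trans
      (reaches_replicate_right hq ht n hnext)

lemma reaches_left_to_one {q : Q} (hq : A.isRight q = false) (ht : ∀ x, A.trans q (.inl x) q)
    (hlam : ∀ x, lam q (.inl x) q = 0) : ∀ {i : ℕ}, i ≤ w.length →
      A.Reaches lam w (q, i + 1) (q, 1) 0
  | 0, _ => .refl _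
  | i + 1, hi => by
    have hx : readAt w (i + 1) = some (.inl w[i]) :=
      readAt_succ_eq_inl_iff.2 (List.getElem?_eq_getElem (by omega))
    simpa [hlam] using
      (Reaches.single_left hq hx (ht _)).trans (reaches_left_to_one hq ht hlam (by omega))

end TwoWayFA

inductive MulState : Type
  | start | pass | back | skip | second | third | done
  deriving DecidableEq

namespace MulState

open AHash TwoWayFA

instance : Fintype MulState :=
  ⟨{start, pass, back, skip, second, third, done}, fun q => by cases q <;> simp⟩

inductive Transition : MulState → (AHash ⊕ Bool) → MulState → Prop
  | start_pass : Transition start (.inr false) pass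
  | start_skip : Transition start (.inr false) skip
  | pass_a : Transition pass (.inl a) pass
  | pass_hash : Transition pass (.inl hash) back
  | back_letter (x : AHash) : Transition back (.inl x) back
  | back_start : Transition back (.inr false) start
  | skip_a : Transition skip (.inl a) skip
  | skip_hash : Transition skip (.inl hash) second
  | second_a : Transition second (.inl a) second
  | second_hash : Transition second (.inl hash) third
  | third_a : Transition third (.inl a) third
  | third_end : Transition third (.inr true) done

def automaton : TwoWayFA AHash MulState where
  isRight
    | back => false
    | _ => true
  init := {start}
  acc := {done}
  trans := Transition

def weight : MulState → (AHash ⊕ Bool) → MulState → (Fin 2 → ℤ)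
  | start, _, pass => ![0, 1]
  | pass, .inl a, pass => ![1, 0]
  | second, .inl a, second => ![0, -1]
  | third, .inl a, third => ![-1, 0]
  | _, _, _ => 0

def blocks (n m k : ℕ) : List AHash :=
  List.replicate n a ++ hash :: (List.replicate m a ++ hash :: List.replicate k a)

section Accepting

variable {w : List AHash} {i : ℕ}

lemma reaches_third {k : ℕ} (hi : i ≤ w.length) (h : w.drop i = List.replicate k a) :
    automaton.Reaches weight w (third, i + 1) (done, w.length + 2) ![-(k : ℤ), 0] := by
  have hk : i + k = w.length := by
    have := congrArg List.length h
    simp only [List.length_drop, List.length_replicate] at this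
    omega
  have hseg := reaches_replicate_right (A := automaton) (lam := weight) (q := third) rfl
    .third_a k (R := []) (by simpa using h)
  have hend : automaton.Reaches weight w (third, i + k + 1) (done, w.length + 2) 0 := by
    rw [hk]; exact Reaches.single_right rfl (readAt_length_add_one w) .third_end
  convert hseg.trans hend using 1
  ext j; fin_cases j <;> simp [weight]

lemma reaches_second {m k : ℕ} (h : w.drop i = List.replicate m a ++ hash :: List.replicate k a) :
    automaton.Reaches weight w (second, i + 1) (done, w.length + 2) ![-(k : ℤ), -(m : ℤ)] := by
  have hlen : i + m + 1 ≤ w.length := by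
    have := congrArg List.length h
    simp only [List.length_drop, List.length_append, List.length_replicate,
      List.length_cons] at this
    omega
  have hhash : w.drop (i + m) = hash :: List.replicate k a := by rw [← List.drop_drop, h]; simp
  have hthird : w.drop (i + m + 1) = List.replicate k a := by rw [← List.drop_drop, hhash]; rfl
  have hseg := reaches_replicate_right (A := automaton) (lam := weight) (q := second) rfl
    .second_a m h
  have hstep := Reaches.single_right (A := automaton) (lam := weight) rfl
    (readAt_succ_of_drop_eq_cons hhash) Transition.second_hash
  convert hseg.trans (hstep.trans (reaches_third hlen hthird)) using 1
  ext j; fin_cases j <;> simp [weight]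

lemma reaches_skip {n m k : ℕ} (h : w.drop i = blocks n m k) :
    automaton.Reaches weight w (skip, i + 1) (done, w.length + 2) ![-(k : ℤ), -(m : ℤ)] := by
  have hhash : w.drop (i + n) = hash :: (List.replicate m a ++ hash :: List.replicate k a) := by
    rw [← List.drop_drop, h]; simp [blocks]
  have hsecond : w.drop (i + n + 1) = List.replicate m a ++ hash :: List.replicate k a := by
    rw [← List.drop_drop, hhash]; rfl
  have hseg := reaches_replicate_right (A := automaton) (lam := weight) (q := skip) rfl
    .skip_a n h
  have hstep := Reaches.single_right (A := automaton) (lam := weight) rfl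
    (readAt_succ_of_drop_eq_cons hhash) Transition.skip_hash
  convert hseg.trans (hstep.trans (reaches_second hsecond)) using 1
  ext j; fin_cases j <;> simp [weight]

lemma reaches_pass {n : ℕ} {R : List AHash} (h : w = List.replicate n a ++ hash :: R) :
    automaton.Reaches weight w (start, 0) (start, 0) ![(n : ℤ), 1] := by
  have hhash : w.drop n = hash :: R := by simp [h]
  have hlen : n + 1 ≤ w.length := by simp [h]
  have hseg := reaches_replicate_right (A := automaton) (lam := weight) (q := pass) (i := 0) rfl
    .pass_a n (by simpa using h)
  have hstep := Reaches.single_right (A := automaton) (lam := weight) rfl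
    (readAt_succ_of_drop_eq_cons hhash) Transition.pass_hash
  have hback := reaches_left_to_one (A := automaton) (lam := weight) (q := back) rfl
    .back_letter (fun _ => rfl) hlen
  have hstart := Reaches.single_left (A := automaton) (lam := weight) (i := 0) rfl
    (readAt_zero w) .back_start
  have hinit := Reaches.single_right (A := automaton) (lam := weight) (i := 0) rfl
    (readAt_zero w) .start_pass
  simp only [zero_add] at hseg
  convert hinit.trans (hseg.trans (hstep.trans (hback.trans hstart))) using 1
  ext j; fin_cases j <;> simp [weight]

end Accepting

lemma blocks_mem_paLang (n m : ℕ) :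
    blocks n m (n * m) ∈ paLang automaton weight {v | v = 0} := by
  have hpasses (p : ℕ) : automaton.Reaches weight (blocks n m (n * m)) (start, 0) (start, 0)
      (p • ![(n : ℤ), 1]) := by
    induction p with
    | zero => rw [zero_nsmul]; exact .refl _
    | succ p ih => rw [succ_nsmul']; exact (reaches_pass rfl).trans ih
  have hinit := Reaches.single_right (A := automaton) (lam := weight) (i := 0) rfl
    (readAt_zero (blocks n m (n * m))) .start_skip
  have hfinal := hinit.trans (reaches_skip (i := 0) rfl)
  refine mem_paLang_iff.2 ⟨start, rfl, done, rfl, _, ?_, (hpasses m).trans hfinal⟩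
  ext j; fin_cases j <;> simp [weight]; ring

def StartInvariant (w : List AHash) (v : Fin 2 → ℤ) : Prop :=
  ∃ n m k p : ℕ, w = blocks n m k ∧ v = ![(p : ℤ) * n - k, (p : ℤ) - m]

-- A right-reading head at position `j` is about to read `w[j - 1]`, so `w.drop (j - 1)` is the
-- part of `w` still to be read.
def Invariant (w : List AHash) : MulState × ℕ → (Fin 2 → ℤ) → Prop
  | (start, _), v | (back, _), v => StartInvariant w v
  | (pass, j), v => ∃ (i : ℕ) (R : List AHash) (v' : Fin 2 → ℤ),
      w.drop (j - 1) = List.replicate i a ++ hash :: R ∧ StartInvariant w v' ∧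
        v = ![(i : ℤ), 0] + v'
  | (skip, j), v => ∃ n m k : ℕ, w.drop (j - 1) = blocks n m k ∧ v = ![-(k : ℤ), -(m : ℤ)]
  | (second, j), v => ∃ m k : ℕ,
      w.drop (j - 1) = List.replicate m a ++ hash :: List.replicate k a ∧
        v = ![-(k : ℤ), -(m : ℤ)]
  | (third, j), v => ∃ k : ℕ, w.drop (j - 1) = List.replicate k a ∧ v = ![-(k : ℤ), 0]
  | (done, _), v => v = 0

lemma Invariant.of_step {w : List AHash} {c c' : MulState × ℕ} {v : Fin 2 → ℤ}
    (hs : automaton.step w c c') (h : Invariant w c' v) :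
    Invariant w c (stepWeight automaton weight w (c, c') + v) := by
  obtain ⟨q, j⟩ := c
  obtain ⟨q', j'⟩ := c'
  obtain ⟨x, hx, ht, hmove⟩ := hs
  rw [stepWeight_eq hx]
  cases ht <;> simp only [automaton, readIdx, if_true, Bool.false_eq_true, if_false] at hx hmove
  case back_letter | back_start => simpa [Invariant, weight] using h
  all_goals subst hmove; simp only [Invariant, add_tsub_cancel_right] at h ⊢
  case start_pass =>
    obtain rfl := eq_zero_of_readAt_eq_inr_false hx
    obtain ⟨i, R, _, hw, ⟨n, m, k, p, rfl, rfl⟩, rfl⟩ := h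
    obtain rfl : n = i := (List.replicate_append_cons_inj (by decide) hw.symm).symm
    refine ⟨n, m, k, p + 1, rfl, ?_⟩
    ext j; fin_cases j <;> simp [weight] <;> ring
  case start_skip =>
    obtain rfl := eq_zero_of_readAt_eq_inr_false hx
    obtain ⟨n, m, k, hw, rfl⟩ := h
    exact ⟨n, m, k, 0, hw, by simp [weight]⟩
  case pass_a =>
    obtain ⟨i, R, v', hw, hv', rfl⟩ := h
    refine ⟨i + 1, R, v', by rw [drop_pred_eq_cons_of_readAt hx, hw]; rfl, hv', ?_⟩
    ext j; fin_cases j <;> simp [weight, Matrix.vecHead, Matrix.vecTail]; ring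
  case pass_hash =>
    refine ⟨0, w.drop j, v, drop_pred_eq_cons_of_readAt hx, h, ?_⟩
    ext j; fin_cases j <;> simp [weight]
  case skip_a =>
    obtain ⟨n, m, k, hw, rfl⟩ := h
    exact ⟨n + 1, m, k, by rw [drop_pred_eq_cons_of_readAt hx, hw]; rfl, by simp [weight]⟩
  case skip_hash =>
    obtain ⟨m, k, hw, rfl⟩ := h
    exact ⟨0, m, k, by rw [drop_pred_eq_cons_of_readAt hx, hw]; rfl, by simp [weight]⟩
  case second_a =>
    obtain ⟨m, k, hw, rfl⟩ := h
    refine ⟨m + 1, k, by rw [drop_pred_eq_cons_of_readAt hx, hw]; rfl, ?_⟩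
    ext j; fin_cases j <;> simp [weight]
  case second_hash =>
    obtain ⟨k, hw, rfl⟩ := h
    exact ⟨0, k, by rw [drop_pred_eq_cons_of_readAt hx, hw]; rfl, by simp [weight]⟩
  case third_a =>
    obtain ⟨k, hw, rfl⟩ := h
    refine ⟨k + 1, by rw [drop_pred_eq_cons_of_readAt hx, hw]; rfl, ?_⟩
    ext j; fin_cases j <;> simp [weight]
  case third_end =>
    obtain rfl := eq_length_add_one_of_readAt_eq_inr_true hx
    exact ⟨0, by simp, by ext j; fin_cases j <;> simp [weight, h]⟩

lemma Invariant.of_reaches {w : List AHash} {c e : MulState × ℕ} {v : Fin 2 → ℤ}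
    (h : automaton.Reaches weight w c e v) (he : e.1 = done) : Invariant w c v := by
  induction h with
  | refl c => obtain ⟨_, _⟩ := c; subst he; rfl
  | head hs _ ih => exact (ih he).of_step hs

lemma exists_eq_blocks_of_mem_paLang {w : List AHash}
    (hw : w ∈ paLang automaton weight {v | v = 0}) : ∃ n m, w = blocks n m (n * m) := by
  obtain ⟨q₀, hq₀, q₁, hq₁, v, hv, h⟩ := mem_paLang_iff.1 hw
  obtain rfl : q₀ = start := hq₀
  obtain rfl : q₁ = done := hq₁
  obtain rfl : v = 0 := hv
  obtain ⟨n, m, k, p, rfl, hv⟩ := Invariant.of_reaches h rfl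
  have h₀ := congrFun hv 0
  have h₁ := congrFun hv 1
  simp only [Pi.zero_apply, Matrix.cons_val_zero, Matrix.cons_val_one, Matrix.cons_val_fin_one]
    at h₀ h₁
  obtain rfl : m = p := by omega
  obtain rfl : k = n * m := by
    have : (k : ℤ) = n * m := by linarith
    exact_mod_cast this
  exact ⟨n, m, rfl⟩

end MulState

/-- The language { a^n # a^m # a^{n·m} } is accepted by a
(non-deterministic) two-way Parikh automaton of dimension 2 with semi-linear
constraint {(0,0)}. -/
theorem mult_language_accepted_by_2PA :
    ∃ (Q : Type) (_ : Fintype Q) (A : TwoWayFA AHash Q)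
      (lam : Q → (AHash ⊕ Bool) → Q → (Fin 2 → ℤ)),
        paLang A lam {v | v = 0} =
          {w | ∃ n m : ℕ, w = List.replicate n AHash.a ++ AHash.hash ::
            (List.replicate m AHash.a ++ AHash.hash :: List.replicate (n * m) AHash.a)} := by
  refine ⟨MulState, inferInstance, MulState.automaton, MulState.weight,
    Set.ext fun w => ⟨fun hw => ?_, ?_⟩⟩
  · exact MulState.exists_eq_blocks_of_mem_paLang hw
  · rintro ⟨n, m, rfl⟩
    exact MulState.blocks_mem_paLang n m
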